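/- arXiv:1805.12581 — 3 statements merged into one kernel-verified Lean document; each statement's English description precedes it below -/
import Mathlib

section
/- If \bar{\lambda}_0 \ne 0, the relative error of approximating J_d by \tilde{J}_d satisfies E\|J_d - \tilde{J}_d\|_{2,d}^2 / E\|J_d\|_{2,d}^2 = (\bar{\Lambda}/\bar{\lambda}_0) \cdot (1/d); if \bar{\Lambda} \ne 0, then E\|Z_d - \tilde{Z}_d\|_{2,d}^2 / E\|Z_d\|_{2,d}^2 = 1/d. -/
/-!
For fixed `ω`, `t ↦ J̃_d(ω, t)` is the sample mean of `d` independent uniform evaluations of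
`S_ω = ∑ⱼ Xⱼ(ω, ·)`, and `t ↦ Y_d(ω, t)` is a sum of independent evaluations of the `Xⱼ(ω, ·)`.
Hence the box integrals of `(J_d - J̃_d)²` and `Z_d²` are the variances `Var(S_ω) / d` and
`∑ⱼ Var(Xⱼ(ω, ·))` over `[0, 1]`, i.e. sums of covariances `Cov(Xᵢ(ω, ·), Xⱼ(ω, ·))`.
By Fubini, `E Cov(Xᵢ(ω, ·), Xⱼ(ω, ·)) = δᵢⱼ (∫ K(s, s) ds - ∬ K) = δᵢⱼ Λ̄` and
`E (∫ Xᵢ)(∫ Xⱼ) = δᵢⱼ λ̄₀`, which gives the numerator `Λ̄` and the denominators `d λ̄₀` and `d Λ̄`.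
Finally `Z_d - Z̃_d = J̃_d - J_d`.
-/

open MeasureTheory ProbabilityTheory Set Function

section Pi

variable {ι : Type*} [Fintype ι] {α : ι → Type*} [∀ i, MeasurableSpace (α i)]
  {ν : ∀ i, Measure (α i)} [∀ i, IsProbabilityMeasure (ν i)]

theorem integral_pi_sum_sub_integral_sq {f : ∀ i, α i → ℝ} (hf : ∀ i, MemLp (f i) 2 (ν i)) :
    ∫ t, (∑ i, f i (t i) - ∑ i, ∫ x, f i x ∂ν i) ^ 2 ∂Measure.pi ν = ∑ i, Var[f i; ν i] := by
  have hmean : ∫ t, ∑ i, f i (t i) ∂Measure.pi ν = ∑ i, ∫ x, f i x ∂ν i := by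
    rw [integral_finsetSum _ fun i _ => integrable_comp_eval ((hf i).integrable one_le_two)]
    exact Finset.sum_congr rfl fun i _ => integral_comp_eval (hf i).aestronglyMeasurable
  rw [← variance_sum_pi hf, variance_eq_integral]
  · simp only [Finset.sum_apply, hmean]
  · exact Finset.aemeasurable_sum _ fun i _ =>
      (hf i).aestronglyMeasurable.aemeasurable.comp_quasiMeasurePreserving
        (Measure.quasiMeasurePreserving_eval ν i)

end Pi

theorem integral_pi_sampleMean_sub_integral_sq {α : Type*} [MeasurableSpace α] {ν : Measure α}
    [IsProbabilityMeasure ν] {n : ℕ} (hn : n ≠ 0) {S : α → ℝ} (hS : MemLp S 2 ν) :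
    ∫ t, ((∑ l : Fin n, S (t l)) / n - ∫ x, S x ∂ν) ^ 2 ∂Measure.pi (fun _ => ν) =
      Var[S; ν] / n := by
  have hn' : (n : ℝ) ≠ 0 := Nat.cast_ne_zero.2 hn
  have hmean : ∫ x, S x ∂ν = ∑ _ : Fin n, ∫ x, (n : ℝ)⁻¹ * S x ∂ν := by
    simp [integral_const_mul, hn']
  have hterm (t : Fin n → α) : (∑ l, S (t l)) / n = ∑ l, (n : ℝ)⁻¹ * S (t l) := by
    rw [← Finset.mul_sum, inv_mul_eq_div]
  simp only [hterm, hmean]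
  rw [integral_pi_sum_sub_integral_sq (f := fun _ x => (n : ℝ)⁻¹ * S x) fun _ => hS.const_mul _]
  simp only [variance_const_mul, Finset.sum_const, Finset.card_univ, Fintype.card_fin,
    nsmul_eq_mul]
  field_simp

theorem volume_restrict_Icc_pi {ι : Type*} [Fintype ι] (a b : ι → ℝ) :
    (volume : Measure (ι → ℝ)).restrict (Icc a b) =
      Measure.pi fun i => volume.restrict (Icc (a i) (b i)) := by
  rw [← pi_univ_Icc, volume_pi, Measure.restrict_pi_pi]

theorem integral_sum_sum {Ω ι κ : Type*} [MeasurableSpace Ω] {μ : Measure Ω} [Fintype ι]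
    [Fintype κ] {F : ι → κ → Ω → ℝ} (hF : ∀ i j, Integrable (F i j) μ) :
    ∫ ω, ∑ i, ∑ j, F i j ω ∂μ = ∑ i, ∑ j, ∫ ω, F i j ω ∂μ := by
  rw [integral_finsetSum _ fun i _ => integrable_finsetSum _ fun j _ => hF i j]
  exact Finset.sum_congr rfl fun i _ => integral_finsetSum _ fun j _ => hF i j

theorem integrable_integral_mul {Ω α : Type*} [MeasurableSpace Ω] [MeasurableSpace α]
    {μ : Measure Ω} {ν : Measure α} [SFinite ν] {f g : Ω → α → ℝ}
    (hf : MemLp (uncurry f) 2 (μ.prod ν)) (hg : MemLp (uncurry g) 2 (μ.prod ν)) :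
    Integrable (fun ω => ∫ s, f ω s * g ω s ∂ν) μ :=
  (hf.integrable_mul hg).integral_prod_left

section Sections

variable {Ω α : Type*} [MeasurableSpace Ω] [MeasurableSpace α] {μ : Measure Ω} {ν : Measure α}
  [SFinite μ] [IsProbabilityMeasure ν] {f g : Ω → α → ℝ}

theorem MeasureTheory.MemLp.ae_memLp_curry (hf : MemLp (uncurry f) 2 (μ.prod ν)) :
    ∀ᵐ ω ∂μ, MemLp (f ω) 2 ν := by
  filter_upwards [hf.1.prodMk_left, hf.integrable_sq.prod_right_ae] with ω hm hsq
  exact (memLp_two_iff_integrable_sq hm).2 hsq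

theorem integrable_uncurry_mul_prod_prod (hf : MemLp (uncurry f) 2 (μ.prod ν))
    (hg : MemLp (uncurry g) 2 (μ.prod ν)) :
    Integrable (fun q : Ω × α × α => f q.1 q.2.1 * g q.1 q.2.2) (μ.prod (ν.prod ν)) := by
  have hfst : MeasurePreserving (fun q : Ω × α × α => (q.1, q.2.1)) (μ.prod (ν.prod ν))
      (μ.prod ν) := (MeasurePreserving.id μ).prod (measurePreserving_fst (μ := ν) (ν := ν))
  have hsnd : MeasurePreserving (fun q : Ω × α × α => (q.1, q.2.2)) (μ.prod (ν.prod ν))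
      (μ.prod ν) := (MeasurePreserving.id μ).prod (measurePreserving_snd (μ := ν) (ν := ν))
  exact (hf.comp_measurePreserving hfst).integrable_mul (hg.comp_measurePreserving hsnd)

theorem integrable_integral_mul_integral (hf : MemLp (uncurry f) 2 (μ.prod ν))
    (hg : MemLp (uncurry g) 2 (μ.prod ν)) :
    Integrable (fun ω => (∫ s, f ω s ∂ν) * ∫ s, g ω s ∂ν) μ := by
  simpa only [integral_prod_mul] using (integrable_uncurry_mul_prod_prod hf hg).integral_prod_left

theorem integral_integral_mul_integral (hf : MemLp (uncurry f) 2 (μ.prod ν))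
    (hg : MemLp (uncurry g) 2 (μ.prod ν)) :
    ∫ ω, (∫ s, f ω s ∂ν) * (∫ s, g ω s ∂ν) ∂μ =
      ∫ p, ∫ ω, f ω p.1 * g ω p.2 ∂μ ∂(ν.prod ν) := by
  simp_rw [← integral_prod_mul]
  exact integral_integral_swap (integrable_uncurry_mul_prod_prod hf hg)

theorem covariance_ae_eq_sections (hf : MemLp (uncurry f) 2 (μ.prod ν))
    (hg : MemLp (uncurry g) 2 (μ.prod ν)) :
    (fun ω => cov[f ω, g ω; ν]) =ᵐ[μ]
      fun ω => ∫ s, f ω s * g ω s ∂ν - (∫ s, f ω s ∂ν) * ∫ s, g ω s ∂ν := by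
  filter_upwards [hf.ae_memLp_curry, hg.ae_memLp_curry] with ω hfω hgω
  exact covariance_eq_sub hfω hgω

theorem integrable_covariance_sections (hf : MemLp (uncurry f) 2 (μ.prod ν))
    (hg : MemLp (uncurry g) 2 (μ.prod ν)) :
    Integrable (fun ω => cov[f ω, g ω; ν]) μ :=
  ((integrable_integral_mul hf hg).sub
    (integrable_integral_mul_integral hf hg)).congr (covariance_ae_eq_sections hf hg).symm

theorem integral_covariance_sections (hf : MemLp (uncurry f) 2 (μ.prod ν))
    (hg : MemLp (uncurry g) 2 (μ.prod ν)) :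
    ∫ ω, cov[f ω, g ω; ν] ∂μ = ∫ s, ∫ ω, f ω s * g ω s ∂μ ∂ν -
      ∫ p, ∫ ω, f ω p.1 * g ω p.2 ∂μ ∂(ν.prod ν) := by
  rw [integral_congr_ae (covariance_ae_eq_sections hf hg),
    integral_sub (integrable_integral_mul hf hg) (integrable_integral_mul_integral hf hg),
    integral_integral_swap (f := fun ω s => f ω s * g ω s) (hf.integrable_mul hg),
    integral_integral_mul_integral hf hg]

end Sections

section RandomFunctions

variable {Ω α ι : Type*} [MeasurableSpace Ω] [MeasurableSpace α] {μ : Measure Ω} {ν : Measure α}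
  [SFinite μ] [IsProbabilityMeasure ν]

theorem integral_integral_pi_sum_sub_integral_sq [Fintype ι] {X : ι → Ω → α → ℝ}
    (hX : ∀ j, MemLp (uncurry (X j)) 2 (μ.prod ν)) :
    ∫ ω, ∫ t, (∑ j, X j ω (t j) - ∑ j, ∫ s, X j ω s ∂ν) ^ 2 ∂Measure.pi (fun _ => ν) ∂μ =
      ∑ j, ∫ ω, cov[X j ω, X j ω; ν] ∂μ := by
  have hvar : ∀ᵐ ω ∂μ, ∫ t, (∑ j, X j ω (t j) - ∑ j, ∫ s, X j ω s ∂ν) ^ 2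
      ∂Measure.pi (fun _ => ν) = ∑ j, cov[X j ω, X j ω; ν] := by
    filter_upwards [ae_all_iff.2 fun j => (hX j).ae_memLp_curry] with ω hω
    rw [integral_pi_sum_sub_integral_sq hω]
    exact Finset.sum_congr rfl fun j _ =>
      (covariance_self (hω j).aestronglyMeasurable.aemeasurable).symm
  rw [integral_congr_ae hvar,
    integral_finsetSum _ fun j _ => integrable_covariance_sections (hX j) (hX j)]

theorem integral_integral_pi_sampleMean_sq {d : ℕ} (hd : d ≠ 0) {X : Fin d → Ω → α → ℝ}
    (hX : ∀ j, MemLp (uncurry (X j)) 2 (μ.prod ν)) :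
    ∫ ω, ∫ t : Fin d → α, (∑ j, ∫ s, X j ω s ∂ν - ∑ j, (∑ l, X j ω (t l)) / d) ^ 2
        ∂Measure.pi (fun _ => ν) ∂μ =
      (∑ i, ∑ j, ∫ ω, cov[X i ω, X j ω; ν] ∂μ) / d := by
  have hvar : ∀ᵐ ω ∂μ, ∫ t : Fin d → α, (∑ j, ∫ s, X j ω s ∂ν - ∑ j, (∑ l, X j ω (t l)) / d) ^ 2
      ∂Measure.pi (fun _ => ν) = (∑ i, ∑ j, cov[X i ω, X j ω; ν]) / d := by
    filter_upwards [ae_all_iff.2 fun j => (hX j).ae_memLp_curry] with ω hω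
    have hS : MemLp (fun s => ∑ j, X j ω s) 2 ν := memLp_finsetSum _ fun j _ => hω j
    have hmean : ∑ j, ∫ s, X j ω s ∂ν = ∫ s, ∑ j, X j ω s ∂ν :=
      (integral_finsetSum _ fun j _ => (hω j).integrable one_le_two).symm
    have hterm (t : Fin d → α) :
        ∑ j, (∑ l, X j ω (t l)) / d = (∑ l, ∑ j, X j ω (t l)) / d := by
      rw [← Finset.sum_div, Finset.sum_comm]
    simp only [hmean, hterm, ← neg_sub _ (∫ s, ∑ j, X j ω s ∂ν), neg_sq]
    rw [integral_pi_sampleMean_sub_integral_sq hd hS, variance_fun_sum hω]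
  rw [integral_congr_ae hvar, integral_div,
    integral_sum_sum fun i j => integrable_covariance_sections (hX i) (hX j)]

theorem integral_sum_integral_sq [Fintype ι] {X : ι → Ω → α → ℝ}
    (hX : ∀ j, MemLp (uncurry (X j)) 2 (μ.prod ν)) :
    ∫ ω, (∑ j, ∫ s, X j ω s ∂ν) ^ 2 ∂μ =
      ∑ i, ∑ j, ∫ ω, (∫ s, X i ω s ∂ν) * (∫ s, X j ω s ∂ν) ∂μ := by
  simp only [sq, Finset.sum_mul_sum]
  exact integral_sum_sum fun i j => integrable_integral_mul_integral (hX i) (hX j)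

end RandomFunctions

def UncorrelatedWithCovarianceOn {Ω ι : Type*} [MeasurableSpace Ω] [DecidableEq ι]
    (μ : Measure Ω) (X : ι → Ω → ℝ → ℝ) (K : ℝ → ℝ → ℝ) (S : Set ℝ) : Prop :=
  ∀ i j, ∀ t ∈ S, ∀ s ∈ S, ∫ ω, X i ω t * X j ω s ∂μ = if i = j then K t s else 0

instance : IsProbabilityMeasure ((volume : Measure ℝ).restrict (Icc 0 1)) := ⟨by simp⟩

section UnitInterval

variable {Ω ι : Type*} [MeasurableSpace Ω] {μ : Measure Ω} [DecidableEq ι] {X : ι → Ω → ℝ → ℝ}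
  {K : ℝ → ℝ → ℝ}

theorem integral_Icc_integral_mul_eq (hcov : UncorrelatedWithCovarianceOn μ X K (Icc 0 1))
    (i j : ι) :
    ∫ s in Icc (0:ℝ) 1, ∫ ω, X i ω s * X j ω s ∂μ =
      if i = j then ∫ s in (0:ℝ)..1, K s s else 0 := by
  rw [setIntegral_congr_fun measurableSet_Icc fun s hs => hcov i j s hs s hs]
  split_ifs <;> simp [intervalIntegral.integral_of_le, integral_Icc_eq_integral_Ioc]

theorem integral_Icc_prod_integral_mul_eq (hcov : UncorrelatedWithCovarianceOn μ X K (Icc 0 1))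
    {i j : ι} (hint : Integrable (fun p : ℝ × ℝ => ∫ ω, X i ω p.1 * X j ω p.2 ∂μ)
      ((volume.restrict (Icc 0 1)).prod (volume.restrict (Icc 0 1)))) :
    ∫ p, ∫ ω, X i ω p.1 * X j ω p.2 ∂μ
        ∂((volume.restrict (Icc 0 1)).prod (volume.restrict (Icc 0 1))) =
      if i = j then ∫ t in (0:ℝ)..1, ∫ s in (0:ℝ)..1, K t s else 0 := by
  rw [integral_prod _ hint, setIntegral_congr_fun measurableSet_Icc fun t ht =>
    setIntegral_congr_fun measurableSet_Icc fun s hs => hcov i j t ht s hs]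
  split_ifs <;> simp [intervalIntegral.integral_of_le, integral_Icc_eq_integral_Ioc]

variable [SFinite μ]

theorem integral_covariance_sections_of_uncorrelated
    (hX : ∀ j, MemLp (uncurry (X j)) 2 (μ.prod (volume.restrict (Icc 0 1))))
    (hcov : UncorrelatedWithCovarianceOn μ X K (Icc 0 1)) (i j : ι) :
    ∫ ω, cov[X i ω, X j ω; volume.restrict (Icc 0 1)] ∂μ =
      if i = j then (∫ s in (0:ℝ)..1, K s s) - ∫ t in (0:ℝ)..1, ∫ s in (0:ℝ)..1, K t s
      else 0 := by
  rw [integral_covariance_sections (hX i) (hX j), integral_Icc_integral_mul_eq hcov,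
    integral_Icc_prod_integral_mul_eq hcov
      (integrable_uncurry_mul_prod_prod (hX i) (hX j)).integral_prod_right]
  split_ifs <;> simp

theorem integral_integral_mul_integral_of_uncorrelated
    (hX : ∀ j, MemLp (uncurry (X j)) 2 (μ.prod (volume.restrict (Icc 0 1))))
    (hcov : UncorrelatedWithCovarianceOn μ X K (Icc 0 1)) (i j : ι) :
    ∫ ω, (∫ s in Icc 0 1, X i ω s) * (∫ s in Icc 0 1, X j ω s) ∂μ =
      if i = j then ∫ t in (0:ℝ)..1, ∫ s in (0:ℝ)..1, K t s else 0 := by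
  rw [integral_integral_mul_integral (hX i) (hX j), integral_Icc_prod_integral_mul_eq hcov
    (integrable_uncurry_mul_prod_prod (hX i) (hX j)).integral_prod_right]

end UnitInterval

theorem relative_errors_general
    {Ω : Type*} [MeasurableSpace Ω] (μ : Measure Ω) [IsProbabilityMeasure μ]
    (d : ℕ) (hd : 0 < d)
    (X : Fin d → Ω → ℝ → ℝ) (K : ℝ → ℝ → ℝ)
    (hXm : ∀ j, Measurable (Function.uncurry (X j)))
    (hcov : ∀ i j, ∀ t ∈ Icc (0:ℝ) 1, ∀ s ∈ Icc (0:ℝ) 1,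
      ∫ ω, X i ω t * X j ω s ∂μ = if i = j then K t s else 0)
    (hL2 : ∀ j, Integrable (fun p : Ω × ℝ => (X j p.1 p.2)^2)
      (μ.prod (volume.restrict (Icc (0:ℝ) 1))))
    (I : Fin d → Ω → ℝ) (J : Ω → ℝ) (Y Z Jt Zt : Ω → (Fin d → ℝ) → ℝ)
    (hI : ∀ j ω, I j ω = ∫ s in (0:ℝ)..1, X j ω s)
    (hJ : ∀ ω, J ω = ∑ j, I j ω)
    (hY : ∀ ω t, Y ω t = ∑ j, X j ω (t j))
    (hZ : ∀ ω t, Z ω t = Y ω t - J ω)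
    (hJt : ∀ ω t, Jt ω t = ∑ j, (∑ l, X j ω (t l)) / d)
    (hZt : ∀ ω t, Zt ω t = Y ω t - Jt ω t)
    (lam0 Lbar : ℝ)
    (hlam0 : lam0 = ∫ t in (0:ℝ)..1, ∫ s in (0:ℝ)..1, K t s)
    (hLbar : Lbar = (∫ s in (0:ℝ)..1, K s s) - lam0) :
    (lam0 ≠ 0 →
      (∫ ω, (∫ t in Icc (0 : Fin d → ℝ) 1, (J ω - Jt ω t)^2) ∂μ)
        / (∫ ω, (∫ t in Icc (0 : Fin d → ℝ) 1, (J ω)^2) ∂μ)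
        = (Lbar / lam0) * (1 / d))
    ∧ (Lbar ≠ 0 →
      (∫ ω, (∫ t in Icc (0 : Fin d → ℝ) 1, (Z ω t - Zt ω t)^2) ∂μ)
        / (∫ ω, (∫ t in Icc (0 : Fin d → ℝ) 1, (Z ω t)^2) ∂μ)
        = 1 / d) := by
  have hbox : (volume : Measure (Fin d → ℝ)).restrict (Icc 0 1) =
      Measure.pi fun _ => volume.restrict (Icc 0 1) := volume_restrict_Icc_pi 0 1
  have hX (j : Fin d) : MemLp (uncurry (X j)) 2 (μ.prod (volume.restrict (Icc 0 1))) :=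
    (memLp_two_iff_integrable_sq (hXm j).aestronglyMeasurable).2 (hL2 j)
  have hJ' (ω : Ω) : J ω = ∑ j, ∫ s in Icc 0 1, X j ω s := by
    simp [hJ, hI, intervalIntegral.integral_of_le, integral_Icc_eq_integral_Ioc]
  have hnum : ∫ ω, (∫ t in Icc (0 : Fin d → ℝ) 1, (J ω - Jt ω t)^2) ∂μ = Lbar := by
    simp only [hbox, hJ', hJt]
    rw [integral_integral_pi_sampleMean_sq hd.ne' hX]
    simp [integral_covariance_sections_of_uncorrelated hX hcov, ← hlam0, ← hLbar, hd.ne']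
  have hnumZ : ∫ ω, (∫ t in Icc (0 : Fin d → ℝ) 1, (Z ω t - Zt ω t)^2) ∂μ = Lbar := by
    rw [← hnum]
    congr! 4 with ω t
    rw [hZ, hZt]
    ring
  have hdenJ : ∫ ω, (∫ t in Icc (0 : Fin d → ℝ) 1, (J ω)^2) ∂μ = d * lam0 := by
    simp only [hbox, integral_const, probReal_univ, one_smul, hJ']
    simp [integral_sum_integral_sq hX, integral_integral_mul_integral_of_uncorrelated hX hcov,
      ← hlam0]
  have hdenZ : ∫ ω, (∫ t in Icc (0 : Fin d → ℝ) 1, (Z ω t)^2) ∂μ = d * Lbar := by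
    simp only [hbox, hZ, hY, hJ']
    simp [integral_integral_pi_sum_sub_integral_sq hX,
      integral_covariance_sections_of_uncorrelated hX hcov, ← hlam0, ← hLbar]
  have hd' : (d : ℝ) ≠ 0 := Nat.cast_ne_zero.2 hd.ne'
  refine ⟨fun hlam0_ne => ?_, fun hLbar_ne => ?_⟩
  · rw [hnum, hdenJ]
    field_simp
  · rw [hnumZ, hdenZ]
    field_simp

/-- relative errors of the approximations `J̃_d` of `J_d` and `Z̃_d` of `Z_d`:
if `λ̄₀ ≠ 0` then `E‖J_d - J̃_d‖² / E‖J_d‖² = (Λ̄/λ̄₀)·(1/d)`, and if `Λ̄ ≠ 0` then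
`E‖Z_d - Z̃_d‖² / E‖Z_d‖² = 1/d`. -/
theorem relative_errors
    {Ω : Type*} [MeasurableSpace Ω] (μ : Measure Ω) [IsProbabilityMeasure μ]
    (d : ℕ) (hd : 0 < d)
    (X : Fin d → Ω → ℝ → ℝ) (K : ℝ → ℝ → ℝ)
    (hKcont : ContinuousOn (Function.uncurry K) (Icc (0:ℝ) 1 ×ˢ Icc (0:ℝ) 1))
    (hXm : ∀ j, Measurable (Function.uncurry (X j)))
    (hmean : ∀ j, ∀ t ∈ Icc (0:ℝ) 1, ∫ ω, X j ω t ∂μ = 0)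
    (hcov : ∀ i j, ∀ t ∈ Icc (0:ℝ) 1, ∀ s ∈ Icc (0:ℝ) 1,
      ∫ ω, X i ω t * X j ω s ∂μ = if i = j then K t s else 0)
    (hint : ∀ i j, ∀ t ∈ Icc (0:ℝ) 1, ∀ s ∈ Icc (0:ℝ) 1,
      Integrable (fun ω => X i ω t * X j ω s) μ)
    (hL2 : ∀ j, Integrable (fun p : Ω × ℝ => (X j p.1 p.2)^2)
      (μ.prod (volume.restrict (Icc (0:ℝ) 1))))
    (I : Fin d → Ω → ℝ) (J : Ω → ℝ) (Y Z Jt Zt : Ω → (Fin d → ℝ) → ℝ)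
    (hI : ∀ j ω, I j ω = ∫ s in (0:ℝ)..1, X j ω s)
    (hJ : ∀ ω, J ω = ∑ j, I j ω)
    (hY : ∀ ω t, Y ω t = ∑ j, X j ω (t j))
    (hZ : ∀ ω t, Z ω t = Y ω t - J ω)
    (hJt : ∀ ω t, Jt ω t = ∑ j, (∑ l, X j ω (t l)) / d)
    (hZt : ∀ ω t, Zt ω t = Y ω t - Jt ω t)
    (lam0 Lbar : ℝ)
    (hlam0 : lam0 = ∫ t in (0:ℝ)..1, ∫ s in (0:ℝ)..1, K t s)
    (hLbar : Lbar = (∫ s in (0:ℝ)..1, K s s) - lam0) :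
    (lam0 ≠ 0 →
      (∫ ω, (∫ t in Icc (0 : Fin d → ℝ) 1, (J ω - Jt ω t)^2) ∂μ)
        / (∫ ω, (∫ t in Icc (0 : Fin d → ℝ) 1, (J ω)^2) ∂μ)
        = (Lbar / lam0) * (1 / d))
    ∧ (Lbar ≠ 0 →
      (∫ ω, (∫ t in Icc (0 : Fin d → ℝ) 1, (Z ω t - Zt ω t)^2) ∂μ)
        / (∫ ω, (∫ t in Icc (0 : Fin d → ℝ) 1, (Z ω t)^2) ∂μ)
        = 1 / d) :=
  relative_errors_general μ d hd X K hXm hcov hL2 I J Y Z Jt Zt hI hJ hY hZ hJt hZt lam0 Lbar hlam0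
    hLbar
end

section
/- The eigenvalues of the covariance operator of the centred Wiener process W^c(t) = W(t) - \int_0^1 W(s) ds, with covariance function K^{W^c}(t,s) = min(t,s) + (t^2+s^2)/2 - t - s + 1/3, are \bar{\lambda}_k = 1/(\pi^2 k^2), k = 1, 2, 3, .... In particular, the trace of this covariance operator equals \int_0^1 K^{W^c}(s,s) ds = 1/6. -/
open MeasureTheory Set Real

/-- Covariance function of the centred Wiener process. -/
noncomputable def Kc (t s : ℝ) : ℝ := min t s + (t^2 + s^2) / 2 - t - s + 1/3

/-!
Splitting `min t s` at `s = t` gives, for `t ∈ [0,1]`,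
`(Kφ)(t) = ∫₀ᵗ sφ - t ∫₀ᵗ φ + t²/2 ∫₀¹ φ + ∫₀¹ (s²/2 - s + 1/3) φ`.
Hence an eigenfunction `φ` with eigenvalue `λ ≠ 0` is `C²` on `[0,1]`, and `ψ = φ - ∫₀¹ φ` solves
the Neumann problem `λ ψ'' = -ψ`, `ψ'(0) = ψ'(1) = 0`. By uniqueness for linear ODEs, `ψ` is
`A cos (t/√λ)` or `A cosh (t/√(-λ))`, and `ψ'(1) = 0` forces `1/λ = (mπ)²` unless `ψ ≡ 0`; in that
case `φ` is constant, and constants are killed by `K` since `∫₀¹ K(t,s) ds = 0`.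
Conversely `cos (mπt)` is an eigenfunction by direct integration.
-/

open intervalIntegral

theorem eqOn_Icc_of_hasDerivAt_second_order_linear {a b c : ℝ} {y y' z z' : ℝ → ℝ}
    (hy : ∀ t ∈ Icc a b, HasDerivAt y (y' t) t)
    (hy' : ∀ t ∈ Icc a b, HasDerivAt y' (c * y t) t)
    (hz : ∀ t ∈ Icc a b, HasDerivAt z (z' t) t)
    (hz' : ∀ t ∈ Icc a b, HasDerivAt z' (c * z t) t)
    (ha : y a = z a) (ha' : y' a = z' a) :
    EqOn y z (Icc a b) ∧ EqOn y' z' (Icc a b) := by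
  let L : ℝ × ℝ →L[ℝ] ℝ × ℝ :=
    (ContinuousLinearMap.snd ℝ ℝ ℝ).prod (c • ContinuousLinearMap.fst ℝ ℝ ℝ)
  have hL : ∀ {f f' : ℝ → ℝ}, (∀ t ∈ Icc a b, HasDerivAt f (f' t) t) →
      (∀ t ∈ Icc a b, HasDerivAt f' (c * f t) t) →
      ∀ t ∈ Icc a b, HasDerivAt (fun t ↦ (f t, f' t)) (L (f t, f' t)) t :=
    fun hf hf' t ht ↦ (hf t ht).prodMk (hf' t ht)
  have h := ODE_solution_unique (v := fun _ ↦ L) (fun _ ↦ L.lipschitz)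
    (HasDerivAt.continuousOn (hL hy hy'))
    (fun t ht ↦ (hL hy hy' t (Ico_subset_Icc_self ht)).hasDerivWithinAt)
    (HasDerivAt.continuousOn (hL hz hz'))
    (fun t ht ↦ (hL hz hz' t (Ico_subset_Icc_self ht)).hasDerivWithinAt)
    (Prod.ext ha ha')
  exact ⟨fun t ht ↦ congrArg Prod.fst (h ht), fun t ht ↦ congrArg Prod.snd (h ht)⟩

theorem exists_nat_eq_sq_mul_pi_of_neumann {c : ℝ} {y y' : ℝ → ℝ}
    (hy : ∀ t ∈ Icc (0:ℝ) 1, HasDerivAt y (y' t) t)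
    (hy' : ∀ t ∈ Icc (0:ℝ) 1, HasDerivAt y' (-c * y t) t)
    (h0 : y' 0 = 0) (h1 : y' 1 = 0) (hne : ∃ t ∈ Icc (0:ℝ) 1, y t ≠ 0) :
    ∃ m : ℕ, c = (m * π) ^ 2 := by
  set A := y 0
  have hA : A ≠ 0 := by
    intro hA
    obtain ⟨t, ht, hyt⟩ := hne
    exact hyt ((eqOn_Icc_of_hasDerivAt_second_order_linear hy hy' (z' := 0)
      (fun _ _ ↦ hasDerivAt_const _ _) (fun _ _ ↦ by simp)
      hA h0).1 ht)
  have h1mem : (1:ℝ) ∈ Icc 0 1 := right_mem_Icc.2 zero_le_one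
  rcases lt_or_ge c 0 with hc | hc
  · set κ := √(-c)
    have hκ : κ ^ 2 = -c := sq_sqrt (by linarith)
    have hκpos : 0 < κ := sqrt_pos.2 (by linarith)
    have hz : ∀ t ∈ Icc (0:ℝ) 1,
        HasDerivAt (fun t ↦ A * cosh (κ * t)) (A * κ * sinh (κ * t)) t := fun t _ ↦ by
      simpa [mul_assoc, mul_comm κ] using ((hasDerivAt_const_mul κ).cosh.const_mul A)
    have hz' : ∀ t ∈ Icc (0:ℝ) 1,
        HasDerivAt (fun t ↦ A * κ * sinh (κ * t)) (-c * (A * cosh (κ * t))) t := fun t _ ↦ by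
      refine ((hasDerivAt_const_mul κ).sinh.const_mul (A * κ)).congr_deriv ?_
      linear_combination A * cosh (κ * t) * hκ
    have hy'1 := (eqOn_Icc_of_hasDerivAt_second_order_linear hy hy' hz hz'
      (by simp [A]) (by simp [h0])).2 h1mem
    simp only [h1, mul_one] at hy'1
    exact absurd hy'1.symm (mul_ne_zero (mul_ne_zero hA hκpos.ne') (sinh_pos_iff.2 hκpos).ne')
  · set ω := √c
    have hω : ω ^ 2 = c := sq_sqrt hc
    have hz : ∀ t ∈ Icc (0:ℝ) 1,
        HasDerivAt (fun t ↦ A * cos (ω * t)) (-(A * ω) * sin (ω * t)) t := fun t _ ↦ by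
      refine ((hasDerivAt_const_mul ω).cos.const_mul A).congr_deriv ?_
      ring
    have hz' : ∀ t ∈ Icc (0:ℝ) 1,
        HasDerivAt (fun t ↦ -(A * ω) * sin (ω * t)) (-c * (A * cos (ω * t))) t := fun t _ ↦ by
      refine ((hasDerivAt_const_mul ω).sin.const_mul (-(A * ω))).congr_deriv ?_
      linear_combination -(A * cos (ω * t)) * hω
    have hy'1 := (eqOn_Icc_of_hasDerivAt_second_order_linear hy hy' hz hz'
      (by simp [A]) (by simp [h0])).2 h1mem
    simp only [h1, mul_one] at hy'1
    have hsin : sin ω = 0 := by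
      rcases eq_or_ne ω 0 with hω0 | hω0
      · rw [hω0, sin_zero]
      · simpa [hA, hω0] using hy'1
    obtain ⟨n, hn⟩ := sin_eq_zero_iff.1 hsin
    refine ⟨n.natAbs, ?_⟩
    rw [← hω, ← hn, Nat.cast_natAbs, mul_pow, mul_pow, Int.cast_abs, sq_abs]

theorem hasDerivAt_primitive_quadratic_mul_cos {ω : ℝ} (hω : ω ≠ 0) (α β γ x : ℝ) :
    HasDerivAt (fun x ↦ (α + β * x + γ * x ^ 2) * sin (ω * x) / ω
        + (β + 2 * γ * x) * cos (ω * x) / ω ^ 2 - 2 * γ * sin (ω * x) / ω ^ 3)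
      ((α + β * x + γ * x ^ 2) * cos (ω * x)) x := by
  have hlin : HasDerivAt (fun x ↦ ω * x) ω x := hasDerivAt_const_mul ω
  have hq : HasDerivAt (fun x ↦ α + β * x + γ * x ^ 2) (β + 2 * γ * x) x := by
    refine ((((hasDerivAt_id x).const_mul β).const_add α).add
      ((hasDerivAt_pow 2 x).const_mul γ)).congr_deriv ?_
    ring
  have hl : HasDerivAt (fun x ↦ β + 2 * γ * x) (2 * γ) x := by
    simpa using ((hasDerivAt_id x).const_mul (2 * γ)).const_add β
  refine ((((hq.mul hlin.sin).div_const ω).add ((hl.mul hlin.cos).div_const (ω ^ 2))).sub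
    ((hlin.sin.const_mul (2 * γ)).div_const (ω ^ 3))).congr_deriv ?_
  field_simp
  ring

theorem integral_Kc_mul_cos {ω : ℝ} (hω : ω ≠ 0) (hsin : sin ω = 0) {t : ℝ}
    (ht : t ∈ Icc (0:ℝ) 1) :
    ∫ s in (0:ℝ)..1, Kc t s * cos (ω * s) = cos (ω * t) / ω ^ 2 := by
  have hint : ∀ a b : ℝ, IntervalIntegrable (fun s ↦ Kc t s * cos (ω * s)) volume a b :=
    fun a b ↦ (by unfold Kc; fun_prop : Continuous _).intervalIntegrable a b
  have hleft : ∫ s in (0:ℝ)..t, Kc t s * cos (ω * s)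
      = ∫ s in (0:ℝ)..t, ((t ^ 2 / 2 - t + 1 / 3) + 0 * s + 1 / 2 * s ^ 2) * cos (ω * s) := by
    refine integral_congr fun s hs ↦ ?_
    rw [uIcc_of_le ht.1] at hs
    simp only [Kc, min_eq_right hs.2]
    ring
  have hright : ∫ s in t..(1:ℝ), Kc t s * cos (ω * s)
      = ∫ s in t..(1:ℝ), ((t ^ 2 / 2 + 1 / 3) + (-1) * s + 1 / 2 * s ^ 2) * cos (ω * s) := by
    refine integral_congr fun s hs ↦ ?_
    rw [uIcc_of_le ht.2] at hs
    simp only [Kc, min_eq_left hs.1]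
    ring
  rw [← integral_add_adjacent_intervals (hint 0 t) (hint t 1), hleft, hright,
    integral_eq_sub_of_hasDerivAt (fun s _ ↦ hasDerivAt_primitive_quadratic_mul_cos hω _ _ _ s)
      ((by fun_prop : Continuous _).intervalIntegrable _ _),
    integral_eq_sub_of_hasDerivAt (fun s _ ↦ hasDerivAt_primitive_quadratic_mul_cos hω _ _ _ s)
      ((by fun_prop : Continuous _).intervalIntegrable _ _)]
  simp only [mul_zero, mul_one, sin_zero, cos_zero, hsin]
  field_simp
  ring

theorem integral_Kc_mul {φ : ℝ → ℝ} (hφ : Continuous φ) {t : ℝ} (ht : t ∈ Icc (0:ℝ) 1) :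
    ∫ s in (0:ℝ)..1, Kc t s * φ s =
      (∫ s in (0:ℝ)..t, s * φ s) - t * (∫ s in (0:ℝ)..t, φ s)
        + t ^ 2 / 2 * (∫ s in (0:ℝ)..1, φ s) + ∫ s in (0:ℝ)..1, (s ^ 2 / 2 - s + 1 / 3) * φ s := by
  have hint : ∀ f : ℝ → ℝ, Continuous f → ∀ a b : ℝ,
      IntervalIntegrable (fun s ↦ f s * φ s) volume a b :=
    fun f hf a b ↦ (hf.mul hφ).intervalIntegrable a b
  have hmin : ∫ s in (0:ℝ)..1, min t s * φ s
      = (∫ s in (0:ℝ)..t, s * φ s) + t * ((∫ s in (0:ℝ)..1, φ s) - ∫ s in (0:ℝ)..t, φ s) := by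
    rw [← integral_add_adjacent_intervals (hint (min t) (by fun_prop) 0 t)
      (hint (min t) (by fun_prop) t 1),
      integral_interval_sub_left (hφ.intervalIntegrable 0 1) (hφ.intervalIntegrable 0 t),
      ← intervalIntegral.integral_const_mul]
    congr 1 <;> refine integral_congr fun s hs ↦ ?_
    · rw [uIcc_of_le ht.1] at hs
      simp [min_eq_right hs.2]
    · rw [uIcc_of_le ht.2] at hs
      simp [min_eq_left hs.1]
  have hsplit : (fun s ↦ Kc t s * φ s) =
      fun s ↦ min t s * φ s + ((t ^ 2 / 2 - t) * φ s + (s ^ 2 / 2 - s + 1 / 3) * φ s) := by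
    ext s
    simp only [Kc]
    ring
  rw [hsplit, integral_add (hint (min t) (by fun_prop) 0 1)
      ((hint _ continuous_const 0 1).add (hint _ (by fun_prop) 0 1)),
    integral_add (hint _ continuous_const 0 1) (hint _ (by fun_prop) 0 1),
    intervalIntegral.integral_const_mul, hmin]
  ring

theorem integral_Kc {t : ℝ} (ht : t ∈ Icc (0:ℝ) 1) : ∫ s in (0:ℝ)..1, Kc t s = 0 := by
  have hq : ∫ s in (0:ℝ)..1, (s ^ 2 / 2 - s + 1 / 3) = 0 := by
    rw [intervalIntegral.integral_add, intervalIntegral.integral_sub,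
      intervalIntegral.integral_div] <;> norm_num [integral_pow, integral_id]
  have h := integral_Kc_mul (φ := fun _ ↦ 1) continuous_const ht
  simp only [mul_one] at h
  rw [h, hq]
  norm_num [integral_id]
  ring

theorem integral_Kc_diag : ∫ s in (0:ℝ)..1, Kc s s = 1 / 6 := by
  simp only [Kc, min_self]
  norm_num [integral_pow, integral_id]

theorem exists_neumann_solution_of_integral_Kc_mul_eq {lam : ℝ} (hlam : lam ≠ 0) {φ : ℝ → ℝ}
    (hφ : Continuous φ)
    (heq : ∀ t ∈ Icc (0:ℝ) 1, ∫ s in (0:ℝ)..1, Kc t s * φ s = lam * φ t) :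
    ∃ y y' : ℝ → ℝ, (∀ t ∈ Icc (0:ℝ) 1, HasDerivAt y (y' t) t) ∧
      (∀ t ∈ Icc (0:ℝ) 1, HasDerivAt y' (-lam⁻¹ * y t) t) ∧ y' 0 = 0 ∧ y' 1 = 0 ∧
      ∀ t ∈ Icc (0:ℝ) 1, y t = φ t - ∫ s in (0:ℝ)..1, φ s := by
  set C := ∫ s in (0:ℝ)..1, φ s
  set E := ∫ s in (0:ℝ)..1, (s ^ 2 / 2 - s + 1 / 3) * φ s
  set u := fun x ↦ ∫ s in (0:ℝ)..x, φ s
  set w := fun x ↦ ∫ s in (0:ℝ)..x, s * φ s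
  have hu : ∀ x, HasDerivAt u (φ x) x := fun x ↦
    (hφ.integral_hasStrictDerivAt 0 x).hasDerivAt
  have hw : ∀ x, HasDerivAt w (x * φ x) x := fun x ↦
    ((continuous_id.mul hφ).integral_hasStrictDerivAt 0 x).hasDerivAt
  have hφ_eq : ∀ t ∈ Icc (0:ℝ) 1, φ t = (w t - t * u t + t ^ 2 / 2 * C + E) / lam :=
    fun t ht ↦ by rw [eq_div_iff hlam, mul_comm, ← heq t ht, integral_Kc_mul hφ ht]
  refine ⟨fun x ↦ (w x - x * u x + x ^ 2 / 2 * C + E) / lam - C, fun x ↦ (x * C - u x) / lam,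
    fun x _ ↦ ?_, fun x hx ↦ ?_, by simp [u], by simp [u, C], fun t ht ↦ by rw [hφ_eq t ht]⟩
  · refine (((((hw x).sub ((hasDerivAt_id x).mul (hu x))).add
      (((hasDerivAt_pow 2 x).div_const 2).mul_const C)).add_const E).div_const lam).sub_const C
      |>.congr_deriv ?_
    simp only [id]
    ring
  · refine (((hasDerivAt_mul_const C).sub (hu x)).div_const lam).congr_deriv ?_
    rw [hφ_eq x hx]
    field_simp
    ring

theorem exists_nat_eq_of_integral_Kc_mul_eq {lam : ℝ} (hlam : lam ≠ 0) {φ : ℝ → ℝ}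
    (hφ : Continuous φ) (hne : ∃ t ∈ Icc (0:ℝ) 1, φ t ≠ 0)
    (heq : ∀ t ∈ Icc (0:ℝ) 1, ∫ s in (0:ℝ)..1, Kc t s * φ s = lam * φ t) :
    ∃ k : ℕ, lam = 1 / (π ^ 2 * ((k:ℝ) + 1) ^ 2) := by
  obtain ⟨y, y', hy, hy', h0, h1, hyφ⟩ := exists_neumann_solution_of_integral_Kc_mul_eq hlam hφ heq
  by_cases hy_ne : ∃ t ∈ Icc (0:ℝ) 1, y t ≠ 0
  · obtain ⟨m, hm⟩ := exists_nat_eq_sq_mul_pi_of_neumann hy hy' h0 h1 hy_ne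
    obtain ⟨k, rfl⟩ := Nat.exists_eq_succ_of_ne_zero (n := m) (by rintro rfl; simp [hlam] at hm)
    refine ⟨k, ?_⟩
    rw [← inv_inv lam, hm]
    push_cast
    ring
  · push Not at hy_ne
    obtain ⟨t, ht, hφt⟩ := hne
    have hconst : ∀ s ∈ uIcc (0:ℝ) 1, Kc t s * φ s = Kc t s * ∫ s in (0:ℝ)..1, φ s :=
      fun s hs ↦ by
        rw [uIcc_of_le zero_le_one] at hs
        rw [← sub_eq_zero.1 ((hyφ s hs).symm.trans (hy_ne s hs))]
    have : lam * φ t = 0 := by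
      rw [← heq t ht, intervalIntegral.integral_congr hconst, intervalIntegral.integral_mul_const,
        integral_Kc ht, zero_mul]
    exact (hφt ((mul_eq_zero.1 this).resolve_left hlam)).elim

/-- the eigenvalues of the covariance operator of the centred Wiener
process are exactly `1/(π² k²)`, `k = 1, 2, ...`, and the trace equals
`∫_0^1 K^{W^c}(s,s) ds = 1/6`. -/
theorem centred_wiener_eigenvalues :
    (∀ k : ℕ, ∃ φ : ℝ → ℝ, Continuous φ ∧ (∃ t ∈ Icc (0:ℝ) 1, φ t ≠ 0) ∧
      ∀ t ∈ Icc (0:ℝ) 1,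
        ∫ s in (0:ℝ)..1, Kc t s * φ s = (1 / (π^2 * ((k:ℝ)+1)^2)) * φ t)
    ∧ (∀ lam : ℝ, lam ≠ 0 → ∀ φ : ℝ → ℝ, Continuous φ →
        (∃ t ∈ Icc (0:ℝ) 1, φ t ≠ 0) →
        (∀ t ∈ Icc (0:ℝ) 1, ∫ s in (0:ℝ)..1, Kc t s * φ s = lam * φ t) →
        ∃ k : ℕ, lam = 1 / (π^2 * ((k:ℝ)+1)^2))
    ∧ (∫ s in (0:ℝ)..1, Kc s s) = 1/6 := by
  refine ⟨fun k ↦ ?_, fun lam hlam φ hφ hne heq ↦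
    exists_nat_eq_of_integral_Kc_mul_eq hlam hφ hne heq, integral_Kc_diag⟩
  have hω : ((k:ℝ) + 1) * π ≠ 0 := by positivity
  have hsin : sin (((k:ℝ) + 1) * π) = 0 := by exact_mod_cast sin_nat_mul_pi (k + 1)
  refine ⟨fun t ↦ cos (((k:ℝ) + 1) * π * t), by fun_prop, ⟨0, by simp⟩, fun t ht ↦ ?_⟩
  rw [integral_Kc_mul_cos hω hsin ht]
  ring
end

section
/- For the sum of d uncorrelated standard Wiener processes, W_d(t) = \sum_{j=1}^d W_j(t_j) on [0,1]^d, the approximation complexity satisfies n^{W_d}(\varepsilon) = 1 for all \varepsilon in [3^{-1/2}, 1) and all d in N. -/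
/-!
The covariance kernel of `𝕎_d` is `K(t, s) = ∑ⱼ min(tⱼ, sⱼ)`. Its trace `∫ K(t, t) dt = d/2`
bounds `∑ₖ λₖ`, while by Bessel's inequality for the constant function `1` the top eigenvalue
satisfies `λ₀ ≥ ∫∫ K = d/3`. Hence `∑_{k ≥ 1} λₖ ≤ (1/3) ∑ₖ λₖ ≤ ε² ∑ₖ λₖ`, i.e. `n(ε) = 1`.

The eigenfunctions `ψₖ` are not assumed measurable. For `λₖ > 0` measurability is recovered
from the feature map `t ↦ (√λₖ ψₖ t)ₖ ∈ ℓ²`: its inner products `K(t, s)` are measurable in `t`,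
hence so are its inner products with every vector of the closed span of its range, and the
coordinate `√λₖ ψₖ t` is the inner product with the projection of the `k`-th basis vector.
-/

open MeasureTheory Set

/-- Average case approximation complexity determined by the non-increasing eigenvalue
sequence `lam`: `n(ε) = min{ n ≥ 1 : ∑_{k>n} λ_k ≤ ε² ∑_k λ_k }`. -/
noncomputable def apprComplexity (lam : ℕ → ℝ) (ε : ℝ) : ℕ :=
  sInf {n : ℕ | 0 < n ∧ (∑' k, lam (n + k)) ≤ ε^2 * ∑' k, lam k}

open scoped lp InnerProductSpace

section WeakMeasurability

variable {α E : Type*} [MeasurableSpace α] [NormedAddCommGroup E] [InnerProductSpace ℝ E]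
  [CompleteSpace E]

theorem measurable_inner_of_measurable_inner_self {Φ : α → E}
    (hΦ : ∀ s, Measurable fun u => ⟪Φ u, Φ s⟫_ℝ) (w : E) :
    Measurable fun u => ⟪Φ u, w⟫_ℝ := by
  set V := (Submodule.span ℝ (range Φ)).topologicalClosure
  have hspan : ∀ v ∈ Submodule.span ℝ (range Φ), Measurable fun u => ⟪Φ u, v⟫_ℝ := by
    intro v hv
    induction hv using Submodule.span_induction with
    | mem x hx => obtain ⟨s, rfl⟩ := hx; exact hΦ s
    | zero => simp only [inner_zero_right]; exact measurable_const
    | add x y _ _ hx hy => simp only [inner_add_right]; exact hx.add hy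
    | smul c x _ hx => simp only [inner_smul_right]; exact hx.const_mul c
  obtain ⟨v, hv, hvw⟩ := mem_closure_iff_seq_limit.1
    (Submodule.starProjection_apply_mem V w :)
  have hproj : (fun u => ⟪Φ u, w⟫_ℝ) = fun u => ⟪Φ u, V.starProjection w⟫_ℝ := by
    funext u
    rw [← Submodule.inner_starProjection_left_eq_right, Submodule.starProjection_eq_self_iff.2
      (Submodule.le_topologicalClosure _ (Submodule.subset_span (mem_range_self u)))]
  rw [hproj]
  exact measurable_of_tendsto_metrizable (fun n => hspan _ (hv n))
    (tendsto_pi_nhds.2 fun u => tendsto_const_nhds.inner hvw)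

end WeakMeasurability

section SquareIntegrable

variable {α : Type*} [MeasurableSpace α] {ν : Measure α}

theorem memLp_two_of_integral_mul_self_ne_zero {f : α → ℝ} (hf : AEStronglyMeasurable f ν)
    (h : ∫ t, f t * f t ∂ν ≠ 0) : MemLp f 2 ν :=
  (memLp_two_iff_integrable_sq hf).2 <| by
    simpa only [sq] using (not_imp_comm.1 integral_undef h)

theorem inner_toLp_eq_integral_mul {f g : α → ℝ} (hf : MemLp f 2 ν) (hg : MemLp g 2 ν) :
    ⟪hf.toLp f, hg.toLp g⟫_ℝ = ∫ t, f t * g t ∂ν := by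
  rw [L2.inner_def]
  refine integral_congr_ae ?_
  filter_upwards [hf.coeFn_toLp, hg.coeFn_toLp] with t hft hgt
  rw [hft, hgt, RCLike.inner_apply', conj_trivial, mul_comm]

theorem sum_sq_integral_le_one [IsProbabilityMeasure ν] {ι : Type*} [DecidableEq ι] {φ : ι → α → ℝ}
    (hφm : ∀ i, AEStronglyMeasurable (φ i) ν)
    (horth : ∀ i j, ∫ t, φ i t * φ j t ∂ν = if i = j then 1 else 0) (s : Finset ι) :
    ∑ i ∈ s, (∫ t, φ i t ∂ν) ^ 2 ≤ 1 := by
  have hL2 : ∀ i, MemLp (φ i) 2 ν := fun i =>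
    memLp_two_of_integral_mul_self_ne_zero (hφm i) (by simp [horth])
  have hone : MemLp (fun _ => (1 : ℝ)) 2 ν := memLp_const 1
  have hON : Orthonormal ℝ fun i => (hL2 i).toLp :=
    orthonormal_iff_ite.2 fun i j => by rw [inner_toLp_eq_integral_mul, horth]
  have hnorm : ‖hone.toLp‖ ^ 2 = 1 := by
    rw [← real_inner_self_eq_norm_sq, inner_toLp_eq_integral_mul]
    simp
  have hbessel := hON.sum_inner_products_le (s := s) (x := hone.toLp)
  simp only [inner_toLp_eq_integral_mul, mul_one, Real.norm_eq_abs, sq_abs, hnorm] at hbessel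
  exact hbessel

end SquareIntegrable

section FeatureMap

variable {α : Type*} {lam : ℕ → ℝ} {ψ : ℕ → α → ℝ}

open Classical in
noncomputable def featureMap (lam : ℕ → ℝ) (ψ : ℕ → α → ℝ) (t : α) : ℓ²(ℕ, ℝ) :=
  if h : Memℓp (fun k => √(lam k) * ψ k t) 2 then ⟨_, h⟩ else 0

theorem memℓp_sqrt_mul_of_summable (hnonneg : ∀ k, 0 ≤ lam k) {t : α}
    (h : Summable fun k => lam k * ψ k t * ψ k t) :
    Memℓp (fun k => √(lam k) * ψ k t) 2 := by
  refine memℓp_gen (h.congr fun k => ?_)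
  rw [ENNReal.toReal_ofNat, Real.rpow_two, Real.norm_eq_abs, sq_abs, mul_pow,
    Real.sq_sqrt (hnonneg k)]
  ring

theorem featureMap_apply {t : α} (h : Memℓp (fun k => √(lam k) * ψ k t) 2) (k : ℕ) :
    featureMap lam ψ t k = √(lam k) * ψ k t := by
  rw [featureMap, dif_pos h]

theorem hasSum_inner_featureMap (hnonneg : ∀ k, 0 ≤ lam k) {t s : α}
    (ht : Memℓp (fun k => √(lam k) * ψ k t) 2) (hs : Memℓp (fun k => √(lam k) * ψ k s) 2) :
    HasSum (fun k => lam k * ψ k t * ψ k s) ⟪featureMap lam ψ t, featureMap lam ψ s⟫_ℝ := by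
  have hterm : ∀ k, ⟪featureMap lam ψ t k, featureMap lam ψ s k⟫_ℝ = lam k * ψ k t * ψ k s := by
    intro k
    rw [featureMap_apply ht, featureMap_apply hs, RCLike.inner_apply', conj_trivial]
    linear_combination (ψ k t * ψ k s) * Real.mul_self_sqrt (hnonneg k)
  simpa only [hterm] using lp.hasSum_inner (𝕜 := ℝ) (featureMap lam ψ t) (featureMap lam ψ s)

theorem hasSum_of_tsum_eq {G : Set α} {K : α → α → ℝ} (hnonneg : ∀ k, 0 ≤ lam k)
    (hK : ∀ t ∈ G, ∀ s ∈ G, ∑' k, lam k * ψ k t * ψ k s = K t s)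
    (hdiag : ∀ t ∈ G, K t t ≠ 0) :
    ∀ t ∈ G, ∀ s ∈ G, HasSum (fun k => lam k * ψ k t * ψ k s) (K t s) := by
  have hmem : ∀ t ∈ G, Memℓp (fun k => √(lam k) * ψ k t) 2 := fun t ht =>
    -- a divergent series would have `tsum = 0`
    memℓp_sqrt_mul_of_summable hnonneg <| by
      by_contra h
      exact hdiag t ht (by rw [← hK t ht t ht, tsum_eq_zero_of_not_summable h])
  intro t ht s hs
  rw [← hK t ht s hs]
  exact (hasSum_inner_featureMap hnonneg (hmem t ht) (hmem s hs)).summable.hasSum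

end FeatureMap

section MercerExpansion

variable {α : Type*} [MeasurableSpace α] {G : Set α} {K : α → α → ℝ} {lam : ℕ → ℝ}
  {ψ : ℕ → α → ℝ}

theorem exists_measurable_eqOn_sqrt_mul (hGm : MeasurableSet G) (hnonneg : ∀ k, 0 ≤ lam k)
    (hK : ∀ t ∈ G, ∀ s ∈ G, HasSum (fun k => lam k * ψ k t * ψ k s) (K t s))
    (hKm : ∀ s, Measurable fun u => K u s) :
    ∃ g : ℕ → α → ℝ, ∀ k, Measurable (g k) ∧ EqOn (g k) (fun t => √(lam k) * ψ k t) G := by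
  have hmem : ∀ t ∈ G, Memℓp (fun k => √(lam k) * ψ k t) 2 :=
    fun t ht => memℓp_sqrt_mul_of_summable hnonneg (hK t ht t ht).summable
  set Φ := G.indicator (featureMap lam ψ)
  have hΦ : ∀ s, Measurable fun u => ⟪Φ u, Φ s⟫_ℝ := by
    intro s
    by_cases hs : s ∈ G
    · convert (hKm s).indicator hGm using 1
      funext u
      by_cases hu : u ∈ G
      · simp only [Φ, indicator_of_mem hu, indicator_of_mem hs,
          (hasSum_inner_featureMap hnonneg (hmem u hu) (hmem s hs)).unique (hK u hu s hs)]
      · simp only [Φ, indicator_of_notMem hu, inner_zero_left]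
    · simp only [Φ, indicator_of_notMem hs, inner_zero_right]
      exact measurable_const
  refine ⟨fun k u => ⟪Φ u, lp.single 2 k 1⟫_ℝ, fun k =>
    ⟨measurable_inner_of_measurable_inner_self hΦ _, fun t ht => ?_⟩⟩
  simp only [Φ, indicator_of_mem ht, lp.inner_single_right, featureMap_apply (hmem t ht),
    RCLike.inner_apply', conj_trivial, mul_one]

end MercerExpansion

section SpectralBounds

variable {α : Type*} {G : Set α} {K : α → α → ℝ} {lam : ℕ → ℝ} {ψ g : ℕ → α → ℝ}

theorem abs_sum_mul_le (hK : ∀ t ∈ G, ∀ s ∈ G, HasSum (fun k => g k t * g k s) (K t s))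
    {C : ℝ} (hC : ∀ t ∈ G, K t t ≤ C) {t s : α} (ht : t ∈ G) (hs : s ∈ G)
    (F : Finset ℕ) : |∑ k ∈ F, g k t * g k s| ≤ C := by
  have hdiag : ∀ u ∈ G, ∑ k ∈ F, g k u ^ 2 ≤ K u u := fun u hu => by
    simpa only [sq] using sum_le_hasSum F (fun k _ => mul_self_nonneg _) (hK u hu u hu)
  have hC0 : 0 ≤ C :=
    (Finset.sum_nonneg fun k _ => sq_nonneg _).trans ((hdiag t ht).trans (hC t ht))
  refine abs_le_of_sq_le_sq ?_ hC0
  calc (∑ k ∈ F, g k t * g k s) ^ 2 ≤ (∑ k ∈ F, g k t ^ 2) * ∑ k ∈ F, g k s ^ 2 :=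
        Finset.sum_mul_sq_le_sq_mul_sq F _ _
    _ ≤ C ^ 2 := by
        rw [sq C]
        exact mul_le_mul ((hdiag t ht).trans (hC t ht)) ((hdiag s hs).trans (hC s hs))
          (Finset.sum_nonneg fun k _ => sq_nonneg _) hC0

theorem hasSum_mul_of_eqOn_sqrt_mul (hnonneg : ∀ k, 0 ≤ lam k)
    (hg : ∀ k, EqOn (g k) (fun t => √(lam k) * ψ k t) G)
    (hK : ∀ t ∈ G, ∀ s ∈ G, HasSum (fun k => lam k * ψ k t * ψ k s) (K t s)) :
    ∀ t ∈ G, ∀ s ∈ G, HasSum (fun k => g k t * g k s) (K t s) := by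
  intro t ht s hs
  convert hK t ht s hs using 2 with k
  rw [hg k ht, hg k hs]
  linear_combination (ψ k t * ψ k s) * Real.mul_self_sqrt (hnonneg k)

variable [MeasurableSpace α] {ν : Measure α}

theorem integral_eq_sqrt_mul_integral (hG : ∀ᵐ t ∂ν, t ∈ G)
    (hg : ∀ k, EqOn (g k) (fun t => √(lam k) * ψ k t) G) (k : ℕ) :
    ∫ t, g k t ∂ν = √(lam k) * ∫ t, ψ k t ∂ν := by
  rw [← integral_const_mul]
  exact integral_congr_ae (hG.mono fun t ht => hg k ht)

theorem integral_mul_self_eq (hnonneg : ∀ k, 0 ≤ lam k) (hG : ∀ᵐ t ∂ν, t ∈ G)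
    (hg : ∀ k, EqOn (g k) (fun t => √(lam k) * ψ k t) G)
    (horth : ∀ k l, ∫ t, ψ k t * ψ l t ∂ν = if k = l then 1 else 0) (k : ℕ) :
    ∫ t, g k t * g k t ∂ν = lam k := by
  have hae : (fun t => g k t * g k t) =ᵐ[ν] fun t => lam k * (ψ k t * ψ k t) :=
    hG.mono fun t ht => by
      dsimp only
      rw [hg k ht]
      linear_combination (ψ k t * ψ k t) * Real.mul_self_sqrt (hnonneg k)
  rw [integral_congr_ae hae, integral_const_mul, horth, if_pos rfl, mul_one]

theorem aestronglyMeasurable_of_eqOn_sqrt_mul (hG : ∀ᵐ t ∂ν, t ∈ G)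
    (hg : ∀ k, EqOn (g k) (fun t => √(lam k) * ψ k t) G) {k : ℕ} (hgm : Measurable (g k))
    (hk : 0 < lam k) : AEStronglyMeasurable (ψ k) ν := by
  refine (hgm.const_mul (√(lam k))⁻¹).aestronglyMeasurable.congr (hG.mono fun t ht => ?_)
  dsimp only
  rw [hg k ht, inv_mul_cancel_left₀ (Real.sqrt_pos.2 hk).ne']

theorem integrable_mul_self_of_diag_le (hG : ∀ᵐ t ∂ν, t ∈ G)
    (hK : ∀ t ∈ G, ∀ s ∈ G, HasSum (fun k => g k t * g k s) (K t s))
    (hgm : ∀ k, Measurable (g k)) {b : α → ℝ}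
    (hb : Integrable b ν) (hKb : ∀ t ∈ G, K t t ≤ b t) (k : ℕ) :
    Integrable (fun t => g k t * g k t) ν := by
  refine hb.mono' ((hgm k).mul (hgm k)).aestronglyMeasurable (hG.mono fun t ht => ?_)
  rw [Real.norm_eq_abs, abs_mul_self]
  exact (le_hasSum (hK t ht t ht) k fun j _ => mul_self_nonneg _).trans (hKb t ht)

theorem sum_le_integral_diag (hnonneg : ∀ k, 0 ≤ lam k) (hG : ∀ᵐ t ∂ν, t ∈ G)
    (hK : ∀ t ∈ G, ∀ s ∈ G, HasSum (fun k => g k t * g k s) (K t s))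
    (hg : ∀ k, EqOn (g k) (fun t => √(lam k) * ψ k t) G)
    (horth : ∀ k l, ∫ t, ψ k t * ψ l t ∂ν = if k = l then 1 else 0)
    (hgm : ∀ k, Measurable (g k)) (hKint : Integrable (fun t => K t t) ν) (F : Finset ℕ) :
    ∑ k ∈ F, lam k ≤ ∫ t, K t t ∂ν := by
  have hint := integrable_mul_self_of_diag_le hG hK hgm hKint fun t _ => le_rfl
  simp_rw [← integral_mul_self_eq hnonneg hG hg horth]
  rw [← integral_finsetSum F fun k _ => hint k]
  exact integral_mono_ae (integrable_finsetSum F fun k _ => hint k) hKint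
    (hG.mono fun t ht => sum_le_hasSum F (fun k _ => mul_self_nonneg _) (hK t ht t ht))

theorem hasSum_sq_integral [IsProbabilityMeasure ν] (hG : ∀ᵐ t ∂ν, t ∈ G)
    (hK : ∀ t ∈ G, ∀ s ∈ G, HasSum (fun k => g k t * g k s) (K t s))
    (hgm : ∀ k, Measurable (g k)) {C : ℝ}
    (hC : ∀ t ∈ G, K t t ≤ C) :
    HasSum (fun k => (∫ t, g k t ∂ν) ^ 2) (∫ p, K p.1 p.2 ∂ν.prod ν) := by
  have hint : ∀ k, Integrable (g k) ν := fun k =>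
    ((memLp_two_iff_integrable_sq (hgm k).aestronglyMeasurable).2 <| by
      simpa only [sq] using integrable_mul_self_of_diag_le hG hK hgm (integrable_const C) hC k
      ).integrable one_le_two
  have hprod : ∀ k, Integrable (fun p : α × α => g k p.1 * g k p.2) (ν.prod ν) :=
    fun k => (hint k).mul_prod (hint k)
  have hG2 : ∀ᵐ p ∂ν.prod ν, p.1 ∈ G ∧ p.2 ∈ G :=
    (Measure.quasiMeasurePreserving_fst.ae hG).and (Measure.quasiMeasurePreserving_snd.ae hG)
  have hlim := tendsto_integral_of_dominated_convergence
    (F := fun N (p : α × α) => ∑ k ∈ Finset.range N, g k p.1 * g k p.2) (fun _ => C)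
    (fun N => (integrable_finsetSum _ fun k _ => hprod k).aestronglyMeasurable)
    (integrable_const C)
    (fun N => hG2.mono fun p hp => abs_sum_mul_le hK hC hp.1 hp.2 _)
    (hG2.mono fun p hp => (hK _ hp.1 _ hp.2).tendsto_sum_nat)
  refine (hasSum_iff_tendsto_nat_of_nonneg (fun k => sq_nonneg _) _).2 (hlim.congr fun N => ?_)
  rw [integral_finsetSum _ fun k _ => hprod k]
  exact Finset.sum_congr rfl fun k _ => by rw [integral_prod_mul, sq]

theorem sum_sq_integral_le_lam_zero [IsProbabilityMeasure ν] (hnonneg : ∀ k, 0 ≤ lam k)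
    (hmono : Antitone lam) (hG : ∀ᵐ t ∂ν, t ∈ G)
    (hg : ∀ k, EqOn (g k) (fun t => √(lam k) * ψ k t) G)
    (horth : ∀ k l, ∫ t, ψ k t * ψ l t ∂ν = if k = l then 1 else 0)
    (hgm : ∀ k, Measurable (g k)) (F : Finset ℕ) :
    ∑ k ∈ F, (∫ t, g k t ∂ν) ^ 2 ≤ lam 0 := by
  classical
  have hbessel := sum_sq_integral_le_one (ν := ν) (φ := fun k : {k // 0 < lam k} => ψ k)
    (fun k => aestronglyMeasurable_of_eqOn_sqrt_mul hG hg (hgm k) k.2)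
    (fun k l => by simp only [horth, Subtype.ext_iff]) (F.subtype fun k => 0 < lam k)
  rw [Finset.sum_subtype_eq_sum_filter (f := fun k => (∫ t, ψ k t ∂ν) ^ 2)] at hbessel
  calc ∑ k ∈ F, (∫ t, g k t ∂ν) ^ 2
      = ∑ k ∈ F with 0 < lam k, lam k * (∫ t, ψ k t ∂ν) ^ 2 := by
        simp only [integral_eq_sqrt_mul_integral hG hg, mul_pow, Real.sq_sqrt (hnonneg _)]
        refine (Finset.sum_filter_of_ne fun k _ hk => ?_).symm
        exact (hnonneg k).lt_of_ne' (left_ne_zero_of_mul hk)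
    _ ≤ ∑ k ∈ F with 0 < lam k, lam 0 * (∫ t, ψ k t ∂ν) ^ 2 :=
        Finset.sum_le_sum fun k _ => by gcongr; exact hmono (Nat.zero_le k)
    _ ≤ lam 0 := by
        rw [← Finset.mul_sum]
        exact mul_le_of_le_one_right (hnonneg 0) hbessel

theorem summable_and_tsum_le_integral_diag (hnonneg : ∀ k, 0 ≤ lam k) (hGm : MeasurableSet G)
    (hG : ∀ᵐ t ∂ν, t ∈ G) (horth : ∀ k l, ∫ t, ψ k t * ψ l t ∂ν = if k = l then 1 else 0)
    (hK : ∀ t ∈ G, ∀ s ∈ G, HasSum (fun k => lam k * ψ k t * ψ k s) (K t s))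
    (hKm : ∀ s, Measurable fun u => K u s) (hKint : Integrable (fun t => K t t) ν) :
    Summable lam ∧ ∑' k, lam k ≤ ∫ t, K t t ∂ν := by
  obtain ⟨g, hg⟩ := exists_measurable_eqOn_sqrt_mul hGm hnonneg hK hKm
  have hsum := sum_le_integral_diag hnonneg hG (hasSum_mul_of_eqOn_sqrt_mul hnonneg
    (fun k => (hg k).2) hK) (fun k => (hg k).2) horth (fun k => (hg k).1) hKint
  exact ⟨summable_of_sum_le hnonneg hsum, (summable_of_sum_le hnonneg hsum).tsum_le_of_sum_le hsum⟩

theorem integral_prod_le_lam_zero [IsProbabilityMeasure ν] (hnonneg : ∀ k, 0 ≤ lam k)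
    (hmono : Antitone lam) (hGm : MeasurableSet G) (hG : ∀ᵐ t ∂ν, t ∈ G)
    (horth : ∀ k l, ∫ t, ψ k t * ψ l t ∂ν = if k = l then 1 else 0)
    (hK : ∀ t ∈ G, ∀ s ∈ G, HasSum (fun k => lam k * ψ k t * ψ k s) (K t s))
    (hKm : ∀ s, Measurable fun u => K u s) {C : ℝ} (hC : ∀ t ∈ G, K t t ≤ C) :
    ∫ p, K p.1 p.2 ∂ν.prod ν ≤ lam 0 := by
  obtain ⟨g, hg⟩ := exists_measurable_eqOn_sqrt_mul hGm hnonneg hK hKm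
  exact hasSum_le_of_sum_le (hasSum_sq_integral hG (hasSum_mul_of_eqOn_sqrt_mul hnonneg
    (fun k => (hg k).2) hK) (fun k => (hg k).1) hC)
    (sum_sq_integral_le_lam_zero hnonneg hmono hG (fun k => (hg k).2) horth fun k => (hg k).1)

end SpectralBounds

theorem integral_sum_mul_sum_of_uncorrelated {Ω ι : Type*} [MeasurableSpace Ω] {μ : Measure Ω}
    [Fintype ι] {X Y : ι → Ω → ℝ} (hX : ∀ i, MemLp (X i) 2 μ) (hY : ∀ j, MemLp (Y j) 2 μ)
    (hXY : ∀ i j, i ≠ j → ∫ ω, X i ω * Y j ω ∂μ = 0) :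
    ∫ ω, (∑ i, X i ω) * (∑ j, Y j ω) ∂μ = ∑ i, ∫ ω, X i ω * Y i ω ∂μ := by
  have hint : ∀ i j, Integrable (fun ω => X i ω * Y j ω) μ := fun i j =>
    (hX i).integrable_mul (hY j)
  simp_rw [Finset.sum_mul_sum]
  rw [integral_finsetSum _ fun i _ => integrable_finsetSum _ fun j _ => hint i j]
  refine Finset.sum_congr rfl fun i _ => ?_
  rw [integral_finsetSum _ fun j _ => hint i j]
  exact Finset.sum_eq_single i (fun j _ hji => hXY i j hji.symm) (by simp)

-- Only points with positive coordinates: at `t = 0` the value `∫ W(0)² = 0` given by `hcov`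
-- might be the junk value of a non-integrable function.
theorem integral_sum_mul_sum_eq_sum_min {Ω : Type*} [MeasurableSpace Ω] {μ : Measure Ω} {d : ℕ}
    {W : Fin d → Ω → ℝ → ℝ} (hWm : ∀ j, Measurable (Function.uncurry (W j)))
    (hcov : ∀ i j, ∀ t ∈ Icc (0:ℝ) 1, ∀ s ∈ Icc (0:ℝ) 1,
      ∫ ω, W i ω t * W j ω s ∂μ = if i = j then min t s else 0)
    {t s : Fin d → ℝ} (ht : t ∈ univ.pi fun _ => Ioc (0 : ℝ) 1)
    (hs : s ∈ univ.pi fun _ => Ioc (0 : ℝ) 1) :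
    ∫ ω, (∑ j, W j ω (t j)) * (∑ j, W j ω (s j)) ∂μ = ∑ j, min (t j) (s j) := by
  have hIcc : ∀ u ∈ univ.pi fun _ : Fin d => Ioc (0 : ℝ) 1, ∀ j, u j ∈ Icc (0 : ℝ) 1 :=
    fun u hu j => Ioc_subset_Icc_self (hu j (mem_univ j))
  have hL2 : ∀ u ∈ univ.pi fun _ : Fin d => Ioc (0 : ℝ) 1, ∀ j,
      MemLp (fun ω => W j ω (u j)) 2 μ :=
    fun u hu j => memLp_two_of_integral_mul_self_ne_zero
      ((hWm j).comp measurable_prodMk_right).aestronglyMeasurable <| by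
        rw [hcov j j _ (hIcc u hu j) _ (hIcc u hu j), if_pos rfl, min_self]
        exact (hu j (mem_univ j)).1.ne'
  rw [integral_sum_mul_sum_of_uncorrelated (hL2 t ht) (hL2 s hs) fun i j hij => by
    rw [hcov i j _ (hIcc t ht i) _ (hIcc s hs j), if_neg hij]]
  exact Finset.sum_congr rfl fun j _ => by rw [hcov j j _ (hIcc t ht j) _ (hIcc s hs j), if_pos rfl]

instance : IsProbabilityMeasure (volume.restrict (Icc (0 : ℝ) 1)) := ⟨by simp⟩

theorem integral_id_unitInterval : ∫ x in Icc (0 : ℝ) 1, x = 1 / 2 := by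
  rw [integral_Icc_eq_integral_Ioc, ← intervalIntegral.integral_of_le zero_le_one, integral_id]
  norm_num

theorem integral_min_unitInterval {x : ℝ} (hx : x ∈ Icc (0 : ℝ) 1) :
    ∫ y in Icc (0 : ℝ) 1, min x y = x - x ^ 2 / 2 := by
  have hint : ∀ a b : ℝ, IntervalIntegrable (fun y => min x y) volume a b := fun a b =>
    (continuous_const.min continuous_id).intervalIntegrable a b
  have hleft : ∫ y in (0 : ℝ)..x, min x y = ∫ y in (0 : ℝ)..x, y :=
    intervalIntegral.integral_congr fun y hy => min_eq_right (uIcc_of_le hx.1 ▸ hy).2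
  have hright : ∫ y in x..(1 : ℝ), min x y = ∫ _ in x..(1 : ℝ), x :=
    intervalIntegral.integral_congr fun y hy => min_eq_left (uIcc_of_le hx.2 ▸ hy).1
  rw [integral_Icc_eq_integral_Ioc, ← intervalIntegral.integral_of_le zero_le_one,
    ← intervalIntegral.integral_add_adjacent_intervals (hint 0 x) (hint x 1), hleft, hright,
    integral_id, intervalIntegral.integral_const, smul_eq_mul]
  ring

theorem integrable_min_unitSquare : Integrable (fun p : ℝ × ℝ => min p.1 p.2)
    ((volume.restrict (Icc (0 : ℝ) 1)).prod (volume.restrict (Icc (0 : ℝ) 1))) := by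
  rw [Measure.prod_restrict, ← Measure.volume_eq_prod]
  exact continuous_min.continuousOn.integrableOn_compact (isCompact_Icc.prod isCompact_Icc)

theorem integral_prod_min_unitSquare :
    ∫ p, min p.1 p.2 ∂(volume.restrict (Icc (0 : ℝ) 1)).prod (volume.restrict (Icc (0 : ℝ) 1))
      = 1 / 3 := by
  rw [integral_prod _ integrable_min_unitSquare, setIntegral_congr_fun measurableSet_Icc fun x hx =>
    integral_min_unitInterval hx, integral_sub, integral_id_unitInterval, integral_div,
    integral_Icc_eq_integral_Ioc, ← intervalIntegral.integral_of_le zero_le_one, integral_pow]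
  · norm_num
  · exact continuous_id.integrableOn_Icc
  · exact (continuous_pow 2).div_const 2 |>.integrableOn_Icc

theorem volume_restrict_unitCube (d : ℕ) :
    volume.restrict (Icc (0 : Fin d → ℝ) 1) =
      Measure.pi fun _ => volume.restrict (Icc (0 : ℝ) 1) := by
  rw [volume_pi, ← Measure.restrict_pi_pi, pi_univ_Icc]
  rfl

theorem sum_mem_Ioc_of_mem_pi_Ioc {d : ℕ} (hd : 0 < d) {t : Fin d → ℝ}
    (ht : t ∈ univ.pi fun _ => Ioc (0 : ℝ) 1) : ∑ j, t j ∈ Ioc (0 : ℝ) d := by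
  have : Nonempty (Fin d) := ⟨⟨0, hd⟩⟩
  refine ⟨Finset.sum_pos (fun j _ => (ht j (mem_univ j)).1) Finset.univ_nonempty, ?_⟩
  simpa using Finset.sum_le_card_nsmul Finset.univ t 1 fun j _ => (ht j (mem_univ j)).2

section UnitCubeKernel

variable (d : ℕ)

instance : IsProbabilityMeasure (volume.restrict (Icc (0 : Fin d → ℝ) 1)) := by
  rw [volume_restrict_unitCube]
  infer_instance

theorem ae_mem_pi_Ioc_unitCube :
    ∀ᵐ t ∂volume.restrict (Icc (0 : Fin d → ℝ) 1), t ∈ univ.pi fun _ => Ioc (0 : ℝ) 1 := by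
  rw [← Measure.restrict_congr_set (Measure.univ_pi_Ioc_ae_eq_Icc : _ =ᵐ[volume] _)]
  exact ae_restrict_mem (MeasurableSet.univ_pi fun _ => measurableSet_Ioc)

theorem integrable_eval_unitCube (j : Fin d) :
    Integrable (fun t : Fin d → ℝ => t j) (volume.restrict (Icc (0 : Fin d → ℝ) 1)) := by
  rw [volume_restrict_unitCube]
  exact integrable_eval (continuous_id.integrableOn_Icc : Integrable id _)

theorem integrable_sum_unitCube :
    Integrable (fun t : Fin d → ℝ => ∑ j, t j) (volume.restrict (Icc (0 : Fin d → ℝ) 1)) :=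
  integrable_finsetSum _ fun j _ => integrable_eval_unitCube d j

theorem integral_sum_unitCube :
    ∫ t in Icc (0 : Fin d → ℝ) 1, ∑ j, t j = d / 2 := by
  rw [integral_finsetSum _ fun j _ => integrable_eval_unitCube d j, volume_restrict_unitCube]
  simp_rw [integral_eval, integral_id_unitInterval]
  simp [div_eq_mul_inv]

theorem integral_prod_sum_min_unitCube :
    ∫ p, ∑ j, min (p.1 j) (p.2 j) ∂(volume.restrict (Icc (0 : Fin d → ℝ) 1)).prod
      (volume.restrict (Icc (0 : Fin d → ℝ) 1)) = d / 3 := by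
  rw [volume_restrict_unitCube]
  set ν₁ := volume.restrict (Icc (0 : ℝ) 1)
  set ν := Measure.pi fun _ : Fin d => ν₁
  have hpair : ∀ j : Fin d, MeasurePreserving (Prod.map (fun t : Fin d → ℝ => t j) fun t => t j)
      (ν.prod ν) (ν₁.prod ν₁) :=
    fun j => (measurePreserving_eval _ j).prod (measurePreserving_eval _ j)
  have hint : ∀ j : Fin d, Integrable (fun p : (Fin d → ℝ) × (Fin d → ℝ) => min (p.1 j) (p.2 j))
      (ν.prod ν) :=
    fun j => ((hpair j).integrable_comp integrable_min_unitSquare.aestronglyMeasurable).2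
      integrable_min_unitSquare
  have hterm : ∀ j : Fin d, ∫ p, min (p.1 j) (p.2 j) ∂ν.prod ν = 1 / 3 := fun j => by
    rw [← integral_prod_min_unitSquare, ← (hpair j).map_eq, integral_map
      (hpair j).measurable.aemeasurable
      ((hpair j).map_eq ▸ integrable_min_unitSquare.aestronglyMeasurable)]
    rfl
  rw [integral_finsetSum _ fun j _ => hint j]
  simp [hterm, div_eq_mul_inv]

end UnitCubeKernel

theorem apprComplexity_eq_one_of_le {lam : ℕ → ℝ} (hsum : Summable lam) {ε : ℝ}
    (h : (1 - ε ^ 2) * ∑' k, lam k ≤ lam 0) : apprComplexity lam ε = 1 := by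
  have hone : 1 ∈ {n : ℕ | 0 < n ∧ (∑' k, lam (n + k)) ≤ ε^2 * ∑' k, lam k} := by
    refine ⟨one_pos, ?_⟩
    have htail := hsum.tsum_eq_zero_add
    simp_rw [add_comm 1]
    linarith
  exact le_antisymm (Nat.sInf_le hone) (Nat.sInf_mem ⟨1, hone⟩).1

theorem complexity_sum_wiener_eq_one_general
    {Ω : Type*} [MeasurableSpace Ω] (μ : Measure Ω)
    (d : ℕ) (hd : 0 < d)
    (W : Fin d → Ω → ℝ → ℝ)
    (hWm : ∀ j, Measurable (Function.uncurry (W j)))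
    (hcov : ∀ i j, ∀ t ∈ Icc (0:ℝ) 1, ∀ s ∈ Icc (0:ℝ) 1,
      ∫ ω, W i ω t * W j ω s ∂μ = if i = j then min t s else 0)
    (𝕎 : Ω → (Fin d → ℝ) → ℝ)
    (h𝕎 : ∀ ω t, 𝕎 ω t = ∑ j, W j ω (t j))
    -- spectral data of the covariance operator of `𝕎_d` on `L₂([0,1]^d)`
    (lam : ℕ → ℝ) (ψ : ℕ → (Fin d → ℝ) → ℝ)
    (hmono : Antitone lam) (hnonneg : ∀ k, 0 ≤ lam k)
    (horth : ∀ k l, ∫ t in Icc (0 : Fin d → ℝ) 1, ψ k t * ψ l t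
      = if k = l then 1 else 0)
    (hmercer : ∀ t ∈ Icc (0 : Fin d → ℝ) 1, ∀ s ∈ Icc (0 : Fin d → ℝ) 1,
      (∫ ω, 𝕎 ω t * 𝕎 ω s ∂μ) = ∑' k, lam k * ψ k t * ψ k s) :
    ∀ ε : ℝ, 1 / Real.sqrt 3 ≤ ε → ε < 1 → apprComplexity lam ε = 1 := by
  intro ε hε _
  set G := univ.pi fun _ : Fin d => Ioc (0 : ℝ) 1
  have hGm : MeasurableSet G := MeasurableSet.univ_pi fun _ => measurableSet_Ioc
  have hGcube : G ⊆ Icc 0 1 :=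
    pi_univ_Icc (0 : Fin d → ℝ) 1 ▸ pi_mono fun _ _ => Ioc_subset_Icc_self
  have hdiag : ∀ t ∈ G, ∑ j, min (t j) (t j) ∈ Ioc (0 : ℝ) d := fun t ht => by
    simpa only [min_self] using sum_mem_Ioc_of_mem_pi_Ioc hd ht
  have hK : ∀ t ∈ G, ∀ s ∈ G,
      HasSum (fun k => lam k * ψ k t * ψ k s) (∑ j, min (t j) (s j)) := by
    refine hasSum_of_tsum_eq hnonneg (fun t ht s hs => ?_) fun t ht => (hdiag t ht).1.ne'
    rw [← hmercer t (hGcube ht) s (hGcube hs)]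
    simp_rw [h𝕎]
    exact integral_sum_mul_sum_eq_sum_min hWm hcov ht hs
  have hKm : ∀ s : Fin d → ℝ, Measurable fun u : Fin d → ℝ => ∑ j, min (u j) (s j) := by
    fun_prop
  obtain ⟨hsum, htrace⟩ := summable_and_tsum_le_integral_diag hnonneg hGm
    (ae_mem_pi_Ioc_unitCube d) horth hK hKm
    (by simpa only [min_self] using integrable_sum_unitCube d)
  have htop := integral_prod_le_lam_zero hnonneg hmono hGm (ae_mem_pi_Ioc_unitCube d) horth hK
    hKm fun t ht => (hdiag t ht).2
  simp only [min_self, integral_sum_unitCube] at htrace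
  rw [integral_prod_sum_min_unitCube] at htop
  have hε2 : 1 / 3 ≤ ε ^ 2 := by
    have := pow_le_pow_left₀ (by positivity) hε 2
    rwa [div_pow, one_pow, Real.sq_sqrt (by norm_num)] at this
  have hS : 0 ≤ ∑' k, lam k := tsum_nonneg hnonneg
  exact apprComplexity_eq_one_of_le hsum (by nlinarith [mul_le_mul_of_nonneg_right hε2 hS])

/-- for the sum `𝕎_d(t) = ∑_{j=1}^d W_j(t_j)` of `d` uncorrelated
standard Wiener processes, `n^{𝕎_d}(ε) = 1` for all `ε ∈ [3^{-1/2}, 1)` and all `d`. -/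
theorem complexity_sum_wiener_eq_one
    {Ω : Type*} [MeasurableSpace Ω] (μ : Measure Ω) [IsProbabilityMeasure μ]
    (d : ℕ) (hd : 0 < d)
    (W : Fin d → Ω → ℝ → ℝ)
    (hWm : ∀ j, Measurable (Function.uncurry (W j)))
    (hmean : ∀ j, ∀ t ∈ Icc (0:ℝ) 1, ∫ ω, W j ω t ∂μ = 0)
    (hcov : ∀ i j, ∀ t ∈ Icc (0:ℝ) 1, ∀ s ∈ Icc (0:ℝ) 1,
      ∫ ω, W i ω t * W j ω s ∂μ = if i = j then min t s else 0)
    (hL2 : ∀ j, Integrable (fun p : Ω × ℝ => (W j p.1 p.2)^2)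
      (μ.prod (volume.restrict (Icc (0:ℝ) 1))))
    (𝕎 : Ω → (Fin d → ℝ) → ℝ)
    (h𝕎 : ∀ ω t, 𝕎 ω t = ∑ j, W j ω (t j))
    -- spectral data of the covariance operator of `𝕎_d` on `L₂([0,1]^d)`
    (lam : ℕ → ℝ) (ψ : ℕ → (Fin d → ℝ) → ℝ)
    (hmono : Antitone lam) (hnonneg : ∀ k, 0 ≤ lam k) (hsum : Summable lam)
    (horth : ∀ k l, ∫ t in Icc (0 : Fin d → ℝ) 1, ψ k t * ψ l t
      = if k = l then 1 else 0)
    (hmercer : ∀ t ∈ Icc (0 : Fin d → ℝ) 1, ∀ s ∈ Icc (0 : Fin d → ℝ) 1,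
      (∫ ω, 𝕎 ω t * 𝕎 ω s ∂μ) = ∑' k, lam k * ψ k t * ψ k s) :
    ∀ ε : ℝ, 1 / Real.sqrt 3 ≤ ε → ε < 1 → apprComplexity lam ε = 1 :=
  complexity_sum_wiener_eq_one_general μ d hd W hWm hcov 𝕎 h𝕎 lam ψ hmono hnonneg horth hmercer
end
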